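/- Let g be a finite-dimensional real Lie algebra and {·,·} the Lie-Poisson-Jacobi bracket on g* × ℝ. The bracket satisfies the Jacobi identity: {f,{g,k}} + {g,{k,f}} + {k,{f,g}} = 0 for all smooth functions f, g, k on g* × ℝ. -/

import Mathlib

/- `g` is a finite-dimensional real Lie algebra: a finite-dimensional real vector
space together with a bilinear bracket `B` which is alternating and satisfies the
Jacobi identity (these two conditions appear as hypotheses of the theorems below).
Its dual g* is realized as the continuous dual g →L[ℝ] ℝ. -/
variable {g : Type*} [NormedAddCommGroup g] [NormedSpace ℝ g] [FiniteDimensional ℝ g]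

/-- The functional derivative δf/δμ ∈ g of f : g* × ℝ → ℝ with respect to μ ∈ g*,
characterized by Df(μ,z)·(ν,0) = ⟨ν, δf/δμ⟩ for all ν ∈ g*.  (Since g is finite
dimensional, the evaluation pairing identifies g with the dual of g*.) -/
noncomputable def deltaMu (f : (g →L[ℝ] ℝ) × ℝ → ℝ) (p : (g →L[ℝ] ℝ) × ℝ) : g :=
  (Module.evalEquiv ℝ g).symm <|
    (((fderiv ℝ f p).comp (ContinuousLinearMap.inl ℝ (g →L[ℝ] ℝ) ℝ)).toLinearMap).comp
      ((LinearMap.toContinuousLinearMap :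
        (g →ₗ[ℝ] ℝ) ≃ₗ[ℝ] (g →L[ℝ] ℝ)).toLinearMap)

/-- The partial derivative ∂f/∂z of f : g* × ℝ → ℝ in the ℝ-variable. -/
noncomputable def deltaZ (f : (g →L[ℝ] ℝ) × ℝ → ℝ) (p : (g →L[ℝ] ℝ) × ℝ) : ℝ :=
  fderiv ℝ f p (0, 1)

/-- The Lie-Poisson-Jacobi bracket on g* × ℝ (B is the Lie bracket of g):
{f,k}(μ,z) = ⟨μ,[δf/δμ, δk/δμ]⟩ + ⟨μ,δf/δμ⟩ ∂k/∂z - ⟨μ,δk/δμ⟩ ∂f/∂z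
             - f ∂k/∂z + k ∂f/∂z. -/
noncomputable def LPJBracket (B : g →ₗ[ℝ] g →ₗ[ℝ] g)
    (f k : (g →L[ℝ] ℝ) × ℝ → ℝ) (p : (g →L[ℝ] ℝ) × ℝ) : ℝ :=
  p.1 (B (deltaMu f p) (deltaMu k p)) + p.1 (deltaMu f p) * deltaZ k p
    - p.1 (deltaMu k p) * deltaZ f p - f p * deltaZ k p + k p * deltaZ f p

namespace LPJaux

/-- The linear map underlying `deltaMu`. -/
noncomputable def PhiAux : ((g →L[ℝ] ℝ) × ℝ →L[ℝ] ℝ) →ₗ[ℝ] g where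
  toFun L := (Module.evalEquiv ℝ g).symm <|
    ((L.comp (ContinuousLinearMap.inl ℝ (g →L[ℝ] ℝ) ℝ)).toLinearMap).comp
      ((LinearMap.toContinuousLinearMap :
        (g →ₗ[ℝ] ℝ) ≃ₗ[ℝ] (g →L[ℝ] ℝ)).toLinearMap)
  map_add' L M := by rw [← map_add]; exact congrArg _ (by ext x; simp)
  map_smul' c L := by simp only [RingHom.id_apply]; rw [← map_smul]; exact congrArg _ (by ext x; simp)

noncomputable def PhiC : ((g →L[ℝ] ℝ) × ℝ →L[ℝ] ℝ) →L[ℝ] g :=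
  LinearMap.toContinuousLinearMap (E := ((g →L[ℝ] ℝ) × ℝ →L[ℝ] ℝ)) PhiAux

lemma apply_PhiC (L : (g →L[ℝ] ℝ) × ℝ →L[ℝ] ℝ) (ν : g →L[ℝ] ℝ) :
    ν (PhiC L) = L (ν, 0) := by
  have h1 : ⇑(PhiC (g := g)) = ⇑(PhiAux (g := g)) :=
    LinearMap.coe_toContinuousLinearMap' _
  have h2 : (LinearMap.toContinuousLinearMap (ν : g →ₗ[ℝ] ℝ)) = ν := by
    ext x; simp
  have h3 : (ν : g →ₗ[ℝ] ℝ) (PhiAux L) = _ :=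
    Module.apply_evalEquiv_symm_apply ℝ g (ν : g →ₗ[ℝ] ℝ)
      (((L.comp (ContinuousLinearMap.inl ℝ (g →L[ℝ] ℝ) ℝ)).toLinearMap).comp
        ((LinearMap.toContinuousLinearMap :
          (g →ₗ[ℝ] ℝ) ≃ₗ[ℝ] (g →L[ℝ] ℝ)).toLinearMap))
  rw [h1]
  show (ν : g →ₗ[ℝ] ℝ) (PhiAux L) = L (ν, 0)
  rw [h3]
  simp [h2]

lemma deltaMu_eq (f : (g →L[ℝ] ℝ) × ℝ → ℝ) :
    deltaMu f = fun p => PhiC (fderiv ℝ f p) := by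
  funext p
  show _ = PhiAux (fderiv ℝ f p)
  rfl

lemma apply_deltaMu (f : (g →L[ℝ] ℝ) × ℝ → ℝ) (p : (g →L[ℝ] ℝ) × ℝ)
    (ν : g →L[ℝ] ℝ) : ν (deltaMu f p) = fderiv ℝ f p (ν, 0) := by
  rw [deltaMu_eq]; exact apply_PhiC _ _


noncomputable def tau (B : g →ₗ[ℝ] g →ₗ[ℝ] g) (μ : g →L[ℝ] ℝ) (y : g) :
    g →L[ℝ] ℝ :=
  LinearMap.toContinuousLinearMap ((μ : g →ₗ[ℝ] ℝ).comp (B y))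

@[simp] lemma tau_apply (B : g →ₗ[ℝ] g →ₗ[ℝ] g) (μ : g →L[ℝ] ℝ) (y x : g) :
    tau B μ y x = μ (B y x) := by
  simp [tau]

noncomputable def Bc (B : g →ₗ[ℝ] g →ₗ[ℝ] g) : g →L[ℝ] g →L[ℝ] g :=
  LinearMap.toContinuousLinearMap
    ((LinearMap.toContinuousLinearMap :
      (g →ₗ[ℝ] g) ≃ₗ[ℝ] (g →L[ℝ] g)).toLinearMap ∘ₗ B)

@[simp] lemma Bc_apply (B : g →ₗ[ℝ] g →ₗ[ℝ] g) (x y : g) : Bc B x y = B x y := by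
  simp [Bc]

lemma skew (B : g →ₗ[ℝ] g →ₗ[ℝ] g) (hBalt : ∀ x : g, B x x = 0) (x y : g) :
    B x y = - B y x := by
  have h := hBalt (x + y)
  simp only [map_add, LinearMap.add_apply, hBalt, zero_add, add_zero] at h
  have h2 : B x y + B y x = 0 := by rw [add_comm]; exact h
  exact eq_neg_of_add_eq_zero_left h2

lemma pair_PhiC_right (B : g →ₗ[ℝ] g →ₗ[ℝ] g) (μ : g →L[ℝ] ℝ) (x : g)
    (L : (g →L[ℝ] ℝ) × ℝ →L[ℝ] ℝ) :
    μ (B x (PhiC L)) = L (tau B μ x, 0) := by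
  rw [← tau_apply B μ x (PhiC L)]; exact apply_PhiC _ _

lemma pair_PhiC_left (B : g →ₗ[ℝ] g →ₗ[ℝ] g) (hBalt : ∀ x : g, B x x = 0)
    (μ : g →L[ℝ] ℝ) (x : g) (L : (g →L[ℝ] ℝ) × ℝ →L[ℝ] ℝ) :
    μ (B (PhiC L) x) = - L (tau B μ x, 0) := by
  rw [skew B hBalt, map_neg, pair_PhiC_right]


lemma hasFDerivAt_snd_deriv (k : (g →L[ℝ] ℝ) × ℝ → ℝ) (hk : ContDiff ℝ (⊤ : ℕ∞) k)
    (p : (g →L[ℝ] ℝ) × ℝ) :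
    HasFDerivAt (fderiv ℝ k) (fderiv ℝ (fderiv ℝ k) p) p :=
  (((hk.fderiv_right (m := 1) (WithTop.coe_le_coe.mpr le_top)).differentiable one_ne_zero) p).hasFDerivAt

lemma sym2 (k : (g →L[ℝ] ℝ) × ℝ → ℝ) (hk : ContDiff ℝ (⊤ : ℕ∞) k)
    (p v w : (g →L[ℝ] ℝ) × ℝ) :
    fderiv ℝ (fderiv ℝ k) p v w = fderiv ℝ (fderiv ℝ k) p w v :=
  second_derivative_symmetric
    (fun y => ((hk.differentiable (by simp)) y).hasFDerivAt)
    (hasFDerivAt_snd_deriv k hk p) v w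

set_option maxHeartbeats 2000000 in
lemma fderiv_LPJ (B : g →ₗ[ℝ] g →ₗ[ℝ] g) (hBalt : ∀ x : g, B x x = 0)
    (k j : (g →L[ℝ] ℝ) × ℝ → ℝ) (hk : ContDiff ℝ (⊤ : ℕ∞) k) (hj : ContDiff ℝ (⊤ : ℕ∞) j)
    (p v : (g →L[ℝ] ℝ) × ℝ) :
    fderiv ℝ (LPJBracket B k j) p v =
      v.1 (B (deltaMu k p) (deltaMu j p))
      - fderiv ℝ (fderiv ℝ k) p v (tau B p.1 (deltaMu j p), 0)
      + fderiv ℝ (fderiv ℝ j) p v (tau B p.1 (deltaMu k p), 0)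
      + v.1 (deltaMu k p) * deltaZ j p
      + fderiv ℝ (fderiv ℝ k) p v (p.1, 0) * deltaZ j p
      + p.1 (deltaMu k p) * fderiv ℝ (fderiv ℝ j) p v (0, 1)
      - v.1 (deltaMu j p) * deltaZ k p
      - fderiv ℝ (fderiv ℝ j) p v (p.1, 0) * deltaZ k p
      - p.1 (deltaMu j p) * fderiv ℝ (fderiv ℝ k) p v (0, 1)
      - fderiv ℝ k p v * deltaZ j p - k p * fderiv ℝ (fderiv ℝ j) p v (0, 1)
      + fderiv ℝ j p v * deltaZ k p + j p * fderiv ℝ (fderiv ℝ k) p v (0, 1) := by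
  have hk2 := hasFDerivAt_snd_deriv k hk p
  have hj2 := hasFDerivAt_snd_deriv j hj p
  have Hdk : HasFDerivAt (deltaMu k) (PhiC.comp (fderiv ℝ (fderiv ℝ k) p)) p := by
    rw [deltaMu_eq]
    exact HasFDerivAt.comp (f := fderiv ℝ k) (f' := fderiv ℝ (fderiv ℝ k) p) p (ContinuousLinearMap.hasFDerivAt (𝕜 := ℝ) (E := ((g →L[ℝ] ℝ) × ℝ →L[ℝ] ℝ)) (F := g) PhiC) hk2
  have Hdj : HasFDerivAt (deltaMu j) (PhiC.comp (fderiv ℝ (fderiv ℝ j) p)) p := by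
    rw [deltaMu_eq]
    exact HasFDerivAt.comp (f := fderiv ℝ j) (f' := fderiv ℝ (fderiv ℝ j) p) p (ContinuousLinearMap.hasFDerivAt (𝕜 := ℝ) (E := ((g →L[ℝ] ℝ) × ℝ →L[ℝ] ℝ)) (F := g) PhiC) hj2
  have Hzk : HasFDerivAt (deltaZ k)
      ((fderiv ℝ k p).comp (0 : (g →L[ℝ] ℝ) × ℝ →L[ℝ] (g →L[ℝ] ℝ) × ℝ)
        + (fderiv ℝ (fderiv ℝ k) p).flip (0, 1)) p :=
    hk2.clm_apply (hasFDerivAt_const _ _)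
  have Hzj : HasFDerivAt (deltaZ j)
      ((fderiv ℝ j p).comp (0 : (g →L[ℝ] ℝ) × ℝ →L[ℝ] (g →L[ℝ] ℝ) × ℝ)
        + (fderiv ℝ (fderiv ℝ j) p).flip (0, 1)) p :=
    hj2.clm_apply (hasFDerivAt_const _ _)
  have H1 : HasFDerivAt
      (fun q : (g →L[ℝ] ℝ) × ℝ => q.1 (Bc B (deltaMu k q) (deltaMu j q)))
      ((p.1.comp
          (((Bc B) (deltaMu k p)).comp (PhiC.comp (fderiv ℝ (fderiv ℝ j) p))
            + (((Bc B).comp (PhiC.comp (fderiv ℝ (fderiv ℝ k) p))).flip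
                (deltaMu j p))))
        + (ContinuousLinearMap.fst ℝ (g →L[ℝ] ℝ) ℝ).flip
            (Bc B (deltaMu k p) (deltaMu j p))) p :=
    hasFDerivAt_fst.clm_apply (((Bc B).hasFDerivAt.comp p Hdk).clm_apply Hdj)
  have H2 : HasFDerivAt (fun q : (g →L[ℝ] ℝ) × ℝ => q.1 (deltaMu k q) * deltaZ j q)
      (p.1 (deltaMu k p) • ((fderiv ℝ j p).comp 0
          + (fderiv ℝ (fderiv ℝ j) p).flip (0, 1))
        + deltaZ j p • (p.1.comp (PhiC.comp (fderiv ℝ (fderiv ℝ k) p))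
          + (ContinuousLinearMap.fst ℝ (g →L[ℝ] ℝ) ℝ).flip (deltaMu k p))) p :=
    (hasFDerivAt_fst.clm_apply Hdk).mul Hzj
  have H3 : HasFDerivAt (fun q : (g →L[ℝ] ℝ) × ℝ => q.1 (deltaMu j q) * deltaZ k q)
      (p.1 (deltaMu j p) • ((fderiv ℝ k p).comp 0
          + (fderiv ℝ (fderiv ℝ k) p).flip (0, 1))
        + deltaZ k p • (p.1.comp (PhiC.comp (fderiv ℝ (fderiv ℝ j) p))
          + (ContinuousLinearMap.fst ℝ (g →L[ℝ] ℝ) ℝ).flip (deltaMu j p))) p :=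
    (hasFDerivAt_fst.clm_apply Hdj).mul Hzk
  have H4 : HasFDerivAt (fun q : (g →L[ℝ] ℝ) × ℝ => k q * deltaZ j q)
      (k p • ((fderiv ℝ j p).comp 0 + (fderiv ℝ (fderiv ℝ j) p).flip (0, 1))
        + deltaZ j p • fderiv ℝ k p) p :=
    ((hk.differentiable (by simp)) p).hasFDerivAt.mul Hzj
  have H5 : HasFDerivAt (fun q : (g →L[ℝ] ℝ) × ℝ => j q * deltaZ k q)
      (j p • ((fderiv ℝ k p).comp 0 + (fderiv ℝ (fderiv ℝ k) p).flip (0, 1))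
        + deltaZ k p • fderiv ℝ j p) p :=
    ((hj.differentiable (by simp)) p).hasFDerivAt.mul Hzk
  have Htot := ((((H1.add H2).sub H3).sub H4).add H5)
  have Heq : LPJBracket B k j = (fun q : (g →L[ℝ] ℝ) × ℝ =>
      (q.1 (Bc B (deltaMu k q) (deltaMu j q)) + q.1 (deltaMu k q) * deltaZ j q
        - q.1 (deltaMu j q) * deltaZ k q - k q * deltaZ j q) + j q * deltaZ k q) := by
    funext q
    simp [LPJBracket]
  rw [Heq]; erw [Htot.fderiv]
  simp only [ContinuousLinearMap.add_apply, ContinuousLinearMap.sub_apply,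
    ContinuousLinearMap.coe_comp', Function.comp_apply,
    ContinuousLinearMap.flip_apply, ContinuousLinearMap.smul_apply,
    ContinuousLinearMap.coe_fst', ContinuousLinearMap.zero_apply, map_add,
    map_zero, smul_eq_mul, Bc_apply, pair_PhiC_right,
    pair_PhiC_left B hBalt, apply_PhiC, ContinuousLinearMap.comp_zero]
  ring

end LPJaux

set_option maxHeartbeats 4000000

/-- The Lie-Poisson-Jacobi bracket on g* × ℝ satisfies the Jacobi identity. -/
theorem LPJBracket_jacobi_identity
    (B : g →ₗ[ℝ] g →ₗ[ℝ] g) (hBalt : ∀ x : g, B x x = 0)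
    (hBjac : ∀ x y z : g, B x (B y z) + B y (B z x) + B z (B x y) = 0)
    (f k j : (g →L[ℝ] ℝ) × ℝ → ℝ)
    (hf : ContDiff ℝ (⊤ : ℕ∞) f) (hk : ContDiff ℝ (⊤ : ℕ∞) k) (hj : ContDiff ℝ (⊤ : ℕ∞) j) :
    ∀ p, LPJBracket B f (LPJBracket B k j) p + LPJBracket B k (LPJBracket B j f) p
      + LPJBracket B j (LPJBracket B f k) p = 0 := by
  intro p
  have e1 : ∀ (F K : (g →L[ℝ] ℝ) × ℝ → ℝ), LPJBracket B F K p
      = p.1 (B (deltaMu F p) (deltaMu K p)) + p.1 (deltaMu F p) * deltaZ K p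
        - p.1 (deltaMu K p) * deltaZ F p - F p * deltaZ K p + K p * deltaZ F p :=
    fun F K => rfl
  have ez : ∀ (F : (g →L[ℝ] ℝ) × ℝ → ℝ),
      deltaZ F p = fderiv ℝ F p ((0 : g →L[ℝ] ℝ), (1 : ℝ)) := fun F => rfl
  have hJ : p.1 (B (deltaMu f p) (B (deltaMu k p) (deltaMu j p)))
      + p.1 (B (deltaMu k p) (B (deltaMu j p) (deltaMu f p)))
      + p.1 (B (deltaMu j p) (B (deltaMu f p) (deltaMu k p))) = 0 := by
    have h := congrArg (⇑p.1) (hBjac (deltaMu f p) (deltaMu k p) (deltaMu j p))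
    simpa using h
  have sf := LPJaux.sym2 f hf p
  have sk := LPJaux.sym2 k hk p
  have sj := LPJaux.sym2 j hj p
  rw [e1 f (LPJBracket B k j), e1 k (LPJBracket B j f), e1 j (LPJBracket B f k),
    e1 k j, e1 j f, e1 f k]
  rw [show p.1 (B (deltaMu f p) (deltaMu (LPJBracket B k j) p))
        = LPJaux.tau B p.1 (deltaMu f p) (deltaMu (LPJBracket B k j) p) from
      (LPJaux.tau_apply B p.1 _ _).symm,
    show p.1 (B (deltaMu k p) (deltaMu (LPJBracket B j f) p))
        = LPJaux.tau B p.1 (deltaMu k p) (deltaMu (LPJBracket B j f) p) from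
      (LPJaux.tau_apply B p.1 _ _).symm,
    show p.1 (B (deltaMu j p) (deltaMu (LPJBracket B f k) p))
        = LPJaux.tau B p.1 (deltaMu j p) (deltaMu (LPJBracket B f k) p) from
      (LPJaux.tau_apply B p.1 _ _).symm]
  rw [LPJaux.apply_deltaMu (LPJBracket B k j) p (LPJaux.tau B p.1 (deltaMu f p)),
    LPJaux.apply_deltaMu (LPJBracket B j f) p (LPJaux.tau B p.1 (deltaMu k p)),
    LPJaux.apply_deltaMu (LPJBracket B f k) p (LPJaux.tau B p.1 (deltaMu j p)),
    LPJaux.apply_deltaMu (LPJBracket B k j) p p.1,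
    LPJaux.apply_deltaMu (LPJBracket B j f) p p.1,
    LPJaux.apply_deltaMu (LPJBracket B f k) p p.1,
    ez (LPJBracket B k j), ez (LPJBracket B j f), ez (LPJBracket B f k)]
  rw [LPJaux.fderiv_LPJ B hBalt k j hk hj p (LPJaux.tau B p.1 (deltaMu f p), 0),
    LPJaux.fderiv_LPJ B hBalt k j hk hj p (p.1, 0),
    LPJaux.fderiv_LPJ B hBalt k j hk hj p ((0 : g →L[ℝ] ℝ), (1 : ℝ)),
    LPJaux.fderiv_LPJ B hBalt j f hj hf p (LPJaux.tau B p.1 (deltaMu k p), 0),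
    LPJaux.fderiv_LPJ B hBalt j f hj hf p (p.1, 0),
    LPJaux.fderiv_LPJ B hBalt j f hj hf p ((0 : g →L[ℝ] ℝ), (1 : ℝ)),
    LPJaux.fderiv_LPJ B hBalt f k hf hk p (LPJaux.tau B p.1 (deltaMu j p), 0),
    LPJaux.fderiv_LPJ B hBalt f k hf hk p (p.1, 0),
    LPJaux.fderiv_LPJ B hBalt f k hf hk p ((0 : g →L[ℝ] ℝ), (1 : ℝ))]
  simp only [LPJaux.tau_apply, ContinuousLinearMap.zero_apply, zero_mul, mul_zero,
    add_zero, zero_add, sub_zero, zero_sub, neg_zero,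
    ← LPJaux.apply_deltaMu, ← ez, LPJaux.tau_apply]
  simp only [sk (LPJaux.tau B p.1 (deltaMu j p), 0) (LPJaux.tau B p.1 (deltaMu f p), 0),
    sk (p.1, 0) (LPJaux.tau B p.1 (deltaMu f p), 0),
    sk (p.1, 0) (LPJaux.tau B p.1 (deltaMu j p), 0),
    sk ((0 : g →L[ℝ] ℝ), (1 : ℝ)) (LPJaux.tau B p.1 (deltaMu f p), 0),
    sk ((0 : g →L[ℝ] ℝ), (1 : ℝ)) (LPJaux.tau B p.1 (deltaMu j p), 0),
    sk ((0 : g →L[ℝ] ℝ), (1 : ℝ)) (p.1, 0),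
    sj (LPJaux.tau B p.1 (deltaMu k p), 0) (LPJaux.tau B p.1 (deltaMu f p), 0),
    sj (p.1, 0) (LPJaux.tau B p.1 (deltaMu f p), 0),
    sj (p.1, 0) (LPJaux.tau B p.1 (deltaMu k p), 0),
    sj ((0 : g →L[ℝ] ℝ), (1 : ℝ)) (LPJaux.tau B p.1 (deltaMu f p), 0),
    sj ((0 : g →L[ℝ] ℝ), (1 : ℝ)) (LPJaux.tau B p.1 (deltaMu k p), 0),
    sj ((0 : g →L[ℝ] ℝ), (1 : ℝ)) (p.1, 0),
    sf (LPJaux.tau B p.1 (deltaMu k p), 0) (LPJaux.tau B p.1 (deltaMu j p), 0),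
    sf (p.1, 0) (LPJaux.tau B p.1 (deltaMu k p), 0),
    sf (p.1, 0) (LPJaux.tau B p.1 (deltaMu j p), 0),
    sf ((0 : g →L[ℝ] ℝ), (1 : ℝ)) (LPJaux.tau B p.1 (deltaMu k p), 0),
    sf ((0 : g →L[ℝ] ℝ), (1 : ℝ)) (LPJaux.tau B p.1 (deltaMu j p), 0),
    sf ((0 : g →L[ℝ] ℝ), (1 : ℝ)) (p.1, 0)]
  linear_combination hJ
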